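/- Every perfect matching M of {1,...,2n} can be transformed into a noncrossing matching by finitely many uncrossing moves, each replacing a crossing pair {a,c},{b,d} (a<b<c<d) by either {a,b},{c,d} or {a,d},{b,c}; i.e., the uncrossing process terminates, since each such replacement strictly decreases the number of crossing pairs. -/

import Mathlib

/-! An uncrossing move changes the matching only at its four points `a < b < c < d`, so pairs
of chords avoiding them keep their crossing status. A chord crosses `{s, t}` iff exactly one of
`s, t` lies under it, and the points of `a < b < c < d` under a chord form an interval; checking
the intervals shows that every other chord crosses at most as many of the new chords as of the
old chords `{a, c}, {b, d}`. The new chords do not cross each other, while the old ones did, so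
the number of crossings drops, and repeated moves from any matching reach a noncrossing one. -/

open MvPolynomial Finset

noncomputable section

/-- The polynomial ring ℂ[x_{ij}] for a 2 × (2n) matrix of indeterminates. -/
abbrev PolyR (n : ℕ) := MvPolynomial (Fin 2 × Fin (2 * n)) ℂ

/-- The 2×2 minor Δ_{ab} = x_{1a} x_{2b} - x_{1b} x_{2a} (rows 0,1 in 0-indexing). -/
def Delta {n : ℕ} (a b : Fin (2 * n)) : PolyR n :=
  X (0, a) * X (1, b) - X (0, b) * X (1, a)

/-- A perfect matching on {1,…,2n}, encoded as a fixed-point-free involution. -/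
structure PM (n : ℕ) where
  f : Fin (2 * n) → Fin (2 * n)
  invol : ∀ i, f (f i) = i
  nofix : ∀ i, f i ≠ i

/-- The product Δ_M of the minors over the blocks of a perfect matching M. -/
def DeltaM {n : ℕ} (M : PM n) : PolyR n :=
  ∏ i ∈ Finset.univ.filter (fun i => i < M.f i), Delta i (M.f i)

/-- M is noncrossing: no a < b < c < d with a ∼ c and b ∼ d. -/
def Noncrossing {n : ℕ} (M : PM n) : Prop :=
  ¬ ∃ a b c d : Fin (2 * n), a < b ∧ b < c ∧ c < d ∧ M.f a = c ∧ M.f b = d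

/-- The number of crossing pairs a < b < c < d with a ∼ c, b ∼ d in M. -/
def crossings {n : ℕ} (M : PM n) : ℕ :=
  ((Finset.univ : Finset (Fin (2 * n) × Fin (2 * n))).filter
    (fun p => p.1 < p.2 ∧ p.2 < M.f p.1 ∧ M.f p.1 < M.f p.2)).card

/-- One uncrossing move: replace a crossing pair {a,c},{b,d} (a<b<c<d) by
{a,b},{c,d} or by {a,d},{b,c}, leaving all other blocks unchanged. -/
def UncrossStep {n : ℕ} (M M' : PM n) : Prop :=
  ∃ a b c d : Fin (2 * n), a < b ∧ b < c ∧ c < d ∧ M.f a = c ∧ M.f b = d ∧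
    (∀ k, k ≠ a → k ≠ b → k ≠ c → k ≠ d → M'.f k = M.f k) ∧
    ((M'.f a = b ∧ M'.f c = d) ∨ (M'.f a = d ∧ M'.f b = c))

section SumSplit

variable {α β : Type*} [Fintype α] [DecidableEq α]

theorem Finset.sum_sum_eq_inner_add_mixed_add_outer [AddCommMonoid β] (Q : Finset α)
    (g : α → α → β) :
    ∑ x, ∑ y, g x y = ∑ x ∈ Q, ∑ y ∈ Q, g x y + ∑ z ∈ Qᶜ, ∑ q ∈ Q, (g q z + g z q) +
      ∑ x ∈ Qᶜ, ∑ y ∈ Qᶜ, g x y := by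
  simp only [← sum_add_sum_compl Q, sum_add_distrib, sum_comm (s := Qᶜ) (t := Q)]
  abel

theorem Finset.sum_sum_lt_of_inner_lt_of_mixed_le_of_outer_eq [AddCommMonoid β] [PartialOrder β]
    [IsOrderedCancelAddMonoid β] {g g' : α → α → β} (Q : Finset α)
    (hinner : ∑ x ∈ Q, ∑ y ∈ Q, g' x y < ∑ x ∈ Q, ∑ y ∈ Q, g x y)
    (hmixed : ∀ z ∉ Q, ∑ q ∈ Q, (g' q z + g' z q) ≤ ∑ q ∈ Q, (g q z + g z q))
    (houter : ∀ x ∉ Q, ∀ y ∉ Q, g' x y = g x y) :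
    ∑ x, ∑ y, g' x y < ∑ x, ∑ y, g x y := by
  rw [sum_sum_eq_inner_add_mixed_add_outer Q g, sum_sum_eq_inner_add_mixed_add_outer Q g']
  refine add_lt_add_of_lt_of_le (add_lt_add_of_lt_of_le hinner ?_) (le_of_eq ?_)
  · exact sum_le_sum fun z hz => hmixed z (mem_compl.1 hz)
  · exact sum_congr rfl fun x hx => sum_congr rfl fun y hy =>
      houter x (mem_compl.1 hx) y (mem_compl.1 hy)

end SumSplit

section Chords

variable {α : Type*} [LinearOrder α]

theorem Finset.sum_insert_insert_insert_singleton_of_lt [DecidableEq α] {β : Type*}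
    [AddCommMonoid β] (g : α → β) {a b c d : α} (hab : a < b) (hbc : b < c) (hcd : c < d) :
    ∑ q ∈ ({a, b, c, d} : Finset α), g q = g a + g b + g c + g d := by
  have hbd := hbc.trans hcd
  rw [sum_insert (by simp [hab.ne, (hab.trans hbc).ne, (hab.trans hbd).ne]),
    sum_insert (by simp [hbc.ne, hbd.ne]), sum_pair hcd.ne, add_assoc, add_assoc]

def ChordsCross (s t x y : α) : Prop :=
  s < x ∧ x < t ∧ t < y ∨ x < s ∧ s < y ∧ y < t

instance (s t x y : α) : Decidable (ChordsCross s t x y) := by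
  unfold ChordsCross; infer_instance

theorem ite_chordsCross_eq_zero {s t : α} (hts : t < s) (x y : α) :
    (if ChordsCross s t x y then 1 else 0) = 0 := by
  refine if_neg ?_
  rintro (⟨h₁, h₂, -⟩ | ⟨-, h₁, h₂⟩) <;> exact (h₁.trans h₂).not_gt hts

def crossIndicator (f : α → α) (x y : α) : ℕ :=
  if x < y ∧ y < f x ∧ f x < f y then 1 else 0

theorem crossIndicator_add_crossIndicator (f : α → α) (x y : α) :
    crossIndicator f x y + crossIndicator f y x =
      if ChordsCross x (f x) y (f y) then 1 else 0 := by
  unfold crossIndicator ChordsCross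
  rcases lt_or_ge x y with h | h
  · simp [h, asymm h]
  · simp [h.not_gt]

end Chords

section FourPoints

variable {m : ℕ} {a b c d : Fin m}

theorem chordsCross_parallel_le_crossed (hab : a < b) (hbc : b < c) (hcd : c < d) (z w : Fin m) :
    (if ChordsCross a b z w then 1 else 0) + (if ChordsCross b a z w then 1 else 0) +
        (if ChordsCross c d z w then 1 else 0) + (if ChordsCross d c z w then 1 else 0) ≤
      (if ChordsCross a c z w then 1 else 0) + (if ChordsCross b d z w then 1 else 0) +
        (if ChordsCross c a z w then 1 else 0) + (if ChordsCross d b z w then 1 else 0) := by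
  simp only [ite_chordsCross_eq_zero hab, ite_chordsCross_eq_zero hcd,
    ite_chordsCross_eq_zero (hab.trans hbc), ite_chordsCross_eq_zero (hbc.trans hcd), add_zero]
  by_cases h₁ : ChordsCross a b z w <;> by_cases h₂ : ChordsCross c d z w <;>
    by_cases h₃ : ChordsCross a c z w <;> by_cases h₄ : ChordsCross b d z w <;>
    simp only [h₁, h₂, h₃, h₄, if_true, if_false] <;> unfold ChordsCross at * <;> omega

theorem chordsCross_nested_le_crossed (hab : a < b) (hbc : b < c) (hcd : c < d) (z w : Fin m) :
    (if ChordsCross a d z w then 1 else 0) + (if ChordsCross b c z w then 1 else 0) +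
        (if ChordsCross c b z w then 1 else 0) + (if ChordsCross d a z w then 1 else 0) ≤
      (if ChordsCross a c z w then 1 else 0) + (if ChordsCross b d z w then 1 else 0) +
        (if ChordsCross c a z w then 1 else 0) + (if ChordsCross d b z w then 1 else 0) := by
  simp only [ite_chordsCross_eq_zero hbc, ite_chordsCross_eq_zero (hab.trans (hbc.trans hcd)),
    ite_chordsCross_eq_zero (hab.trans hbc), ite_chordsCross_eq_zero (hbc.trans hcd), add_zero]
  by_cases h₁ : ChordsCross a d z w <;> by_cases h₂ : ChordsCross b c z w <;>
    by_cases h₃ : ChordsCross a c z w <;> by_cases h₄ : ChordsCross b d z w <;>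
    simp only [h₁, h₂, h₃, h₄, if_true, if_false] <;> unfold ChordsCross at * <;> omega

end FourPoints

namespace PM

variable {n : ℕ}

theorem f_eq_of_f_eq (M : PM n) {i j : Fin (2 * n)} (h : M.f i = j) : M.f j = i :=
  h ▸ M.invol i

def conj (M : PM n) (σ : Equiv.Perm (Fin (2 * n))) : PM n where
  f := σ ∘ M.f ∘ σ.symm
  invol i := by simp [M.invol]
  nofix i h := M.nofix (σ.symm i) (σ.injective (by simpa using h))

end PM

section Uncrossing

variable {n : ℕ}

theorem crossings_eq_sum_crossIndicator (M : PM n) :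
    crossings M = ∑ x, ∑ y, crossIndicator M.f x y := by
  rw [crossings, card_filter, Fintype.sum_prod_type]
  rfl

theorem UncrossStep.crossings_lt {M M' : PM n} (h : UncrossStep M M') :
    crossings M' < crossings M := by
  obtain ⟨a, b, c, d, hab, hbc, hcd, hMa, hMb, hoff, hnew⟩ := h
  set Q : Finset (Fin (2 * n)) := {a, b, c, d}
  have hoffQ : ∀ k ∉ Q, M'.f k = M.f k := by
    simp only [Q, mem_insert, mem_singleton, not_or]
    exact fun k hk => hoff k hk.1 hk.2.1 hk.2.2.1 hk.2.2.2
  have hM' : (M'.f a = b ∧ M'.f b = a ∧ M'.f c = d ∧ M'.f d = c) ∨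
      (M'.f a = d ∧ M'.f b = c ∧ M'.f c = b ∧ M'.f d = a) := by
    rcases hnew with ⟨h₁, h₂⟩ | ⟨h₁, h₂⟩
    · exact Or.inl ⟨h₁, M'.f_eq_of_f_eq h₁, h₂, M'.f_eq_of_f_eq h₂⟩
    · exact Or.inr ⟨h₁, h₂, M'.f_eq_of_f_eq h₂, M'.f_eq_of_f_eq h₁⟩
  rw [crossings_eq_sum_crossIndicator, crossings_eq_sum_crossIndicator]
  refine sum_sum_lt_of_inner_lt_of_mixed_le_of_outer_eq Q ?_ (fun z hz => ?_) fun x hx y hy => ?_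
  · calc ∑ x ∈ Q, ∑ y ∈ Q, crossIndicator M'.f x y = 0 := by
          refine sum_eq_zero fun x hx => sum_eq_zero fun y hy => ?_
          simp only [Q, mem_insert, mem_singleton] at hx hy
          rcases hM' with ⟨h₁, h₂, h₃, h₄⟩ | ⟨h₁, h₂, h₃, h₄⟩ <;>
            rcases hx with rfl | rfl | rfl | rfl <;> rcases hy with rfl | rfl | rfl | rfl <;>
            simp only [crossIndicator, h₁, h₂, h₃, h₄] <;> exact if_neg (by omega)
      _ < crossIndicator M.f a b := by simp [crossIndicator, hMa, hMb, hab, hbc, hcd]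
      _ ≤ ∑ y ∈ Q, crossIndicator M.f a y :=
          single_le_sum (fun _ _ => Nat.zero_le _) (by simp [Q])
      _ ≤ ∑ x ∈ Q, ∑ y ∈ Q, crossIndicator M.f x y :=
          single_le_sum (f := fun x => ∑ y ∈ Q, crossIndicator M.f x y)
            (fun _ _ => Nat.zero_le _) (by simp [Q])
  · simp only [Q, crossIndicator_add_crossIndicator,
      sum_insert_insert_insert_singleton_of_lt _ hab hbc hcd]
    rw [hoffQ z hz, hMa, hMb, M.f_eq_of_f_eq hMa, M.f_eq_of_f_eq hMb]
    rcases hM' with ⟨h₁, h₂, h₃, h₄⟩ | ⟨h₁, h₂, h₃, h₄⟩ <;> rw [h₁, h₂, h₃, h₄]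
    exacts [chordsCross_parallel_le_crossed hab hbc hcd _ _,
      chordsCross_nested_le_crossed hab hbc hcd _ _]
  · simp only [crossIndicator, hoffQ x hx, hoffQ y hy]

theorem exists_uncrossStep_of_not_noncrossing {M : PM n} (h : ¬ Noncrossing M) :
    ∃ M', UncrossStep M M' := by
  obtain ⟨a, b, c, d, hab, hbc, hcd, hMa, hMb⟩ := not_not.1 h
  refine ⟨M.conj (Equiv.swap b c), a, b, c, d, hab, hbc, hcd, hMa, hMb,
    fun k hka hkb hkc hkd => ?_, Or.inl ⟨?_, ?_⟩⟩
  · have hfb : M.f k ≠ b := fun h => hkd ((M.f_eq_of_f_eq h).symm.trans hMb)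
    have hfc : M.f k ≠ c := fun h => hka ((M.f_eq_of_f_eq h).symm.trans (M.f_eq_of_f_eq hMa))
    simp [PM.conj, Equiv.swap_apply_of_ne_of_ne, hkb, hkc, hfb, hfc]
  · simp [PM.conj, Equiv.swap_apply_of_ne_of_ne, hab.ne, (hab.trans hbc).ne, hMa]
  · simp [PM.conj, Equiv.swap_apply_of_ne_of_ne, hMb, (hbc.trans hcd).ne', hcd.ne']

end Uncrossing

theorem Relation.exists_reflTransGen_of_lt_measure {α : Type*} {r : α → α → Prop} {P : α → Prop}
    (μ : α → ℕ) (hr : ∀ a b, r a b → μ b < μ a) (hP : ∀ a, ¬ P a → ∃ b, r a b) (a : α) :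
    ∃ b, ReflTransGen r a b ∧ P b := by
  by_cases ha : P a
  · exact ⟨a, .refl, ha⟩
  · obtain ⟨b, hab⟩ := hP a ha
    obtain ⟨c, hbc, hc⟩ := exists_reflTransGen_of_lt_measure μ hr hP b
    exact ⟨c, .head hab hbc, hc⟩
termination_by μ a
decreasing_by exact hr a b hab

theorem uncrossing_terminates (n : ℕ) :
    (∀ M M' : PM n, UncrossStep M M' → crossings M' < crossings M) ∧
    (∀ M : PM n, ∃ M' : PM n, Relation.ReflTransGen UncrossStep M M' ∧ Noncrossing M') :=
  ⟨fun _ _ h => h.crossings_lt,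
    Relation.exists_reflTransGen_of_lt_measure crossings (fun _ _ h => h.crossings_lt)
      fun _ => exists_uncrossStep_of_not_noncrossing⟩
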